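/- Let 1 ≤ k ≤ n and κ ∈ Γ_k. If κ_j ≤ 0 for some index j, then σ_{k-1}(κ|j) ≥ C(n,k) · Σ_{i=1}^n σ_{k-1}(κ|i) for some positive constant C(n,k) depending only on n and k. -/
import Mathlib


/-- The `k`-th elementary symmetric polynomial of `κ ∈ ℝⁿ`. -/
noncomputable def esymm (n k : ℕ) (κ : Fin n → ℝ) : ℝ :=
  ∑ s ∈ Finset.powersetCard k Finset.univ, ∏ i ∈ s, κ i

open Finset

lemma prod_update_zero {n : ℕ} (κ : Fin n → ℝ) (i : Fin n) (s : Finset (Fin n)) :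
    ∏ x ∈ s, Function.update κ i 0 x = if i ∈ s then 0 else ∏ x ∈ s, κ x := by
  split_ifs with h
  · exact Finset.prod_eq_zero h (Function.update_self i 0 κ)
  · refine Finset.prod_congr rfl fun x hx => ?_
    have hxi : x ≠ i := fun e => h (e ▸ hx)
    exact Function.update_of_ne hxi 0 κ

lemma esymm_update {n : ℕ} (κ : Fin n → ℝ) (i : Fin n) (m : ℕ) :
    esymm n m (Function.update κ i 0)
      = ∑ s ∈ (Finset.powersetCard m (univ : Finset (Fin n))).filter (fun s => i ∉ s),
          ∏ x ∈ s, κ x := by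
  unfold esymm
  rw [Finset.sum_congr rfl (fun s _ => prod_update_zero κ i s), Finset.sum_ite,
    Finset.sum_const_zero, zero_add]

lemma esymm_rec {n : ℕ} (κ : Fin n → ℝ) (j : Fin n) (m : ℕ) :
    esymm n (m+1) κ
      = esymm n (m+1) (Function.update κ j 0)
        + κ j * esymm n m (Function.update κ j 0) := by
  rw [esymm_update, esymm_update, Finset.mul_sum]
  unfold esymm
  rw [← Finset.sum_filter_add_sum_filter_not (Finset.powersetCard (m+1) univ)
      (fun s => j ∉ s) (fun s => ∏ x ∈ s, κ x)]
  congr 1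
  refine Finset.sum_bij' (fun s _ => s.erase j) (fun t _ => insert j t) ?_ ?_ ?_ ?_ ?_
  · intro s hs
    simp only [Finset.mem_filter, Finset.mem_powersetCard_univ, not_not] at hs ⊢
    exact ⟨by rw [Finset.card_erase_of_mem hs.2, hs.1]; rfl, Finset.notMem_erase j s⟩
  · intro t ht
    simp only [Finset.mem_filter, Finset.mem_powersetCard_univ] at ht ⊢
    exact ⟨by rw [Finset.card_insert_of_notMem ht.2, ht.1], fun h => h (Finset.mem_insert_self j t)⟩
  · intro s hs
    simp only [Finset.mem_filter, not_not] at hs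
    exact Finset.insert_erase hs.2
  · intro t ht
    simp only [Finset.mem_filter] at ht
    exact Finset.erase_insert ht.2
  · intro s hs
    simp only [Finset.mem_filter, not_not] at hs
    exact (Finset.mul_prod_erase s κ hs.2).symm

lemma sum_esymm_update {n : ℕ} (κ : Fin n → ℝ) (m : ℕ) :
    ∑ i : Fin n, esymm n m (Function.update κ i 0)
      = ((n - m : ℕ) : ℝ) * esymm n m κ := by
  have h1 : ∀ i : Fin n, esymm n m (Function.update κ i 0)
      = ∑ s ∈ Finset.powersetCard m (univ : Finset (Fin n)),
          if i ∈ s then 0 else ∏ x ∈ s, κ x := by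
    intro i
    unfold esymm
    exact Finset.sum_congr rfl fun s _ => prod_update_zero κ i s
  rw [Finset.sum_congr rfl fun i _ => h1 i, Finset.sum_comm]
  unfold esymm
  rw [Finset.mul_sum]
  refine Finset.sum_congr rfl fun s hs => ?_
  rw [Finset.mem_powersetCard_univ] at hs
  rw [Finset.sum_ite, Finset.sum_const_zero, zero_add, Finset.sum_const, nsmul_eq_mul]
  congr 2
  rw [Finset.filter_not, Finset.filter_mem_eq_inter, Finset.univ_inter,
    Finset.card_sdiff_of_subset (Finset.subset_univ s), Finset.card_univ, Fintype.card_fin, hs]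

/-- If κ ∈ Γ_k and κ_j ≤ 0, then σ_{k-1}(κ|j) ≥ C(n,k) Σ_i σ_{k-1}(κ|i) for a positive
    constant C(n,k) depending only on n and k. -/
theorem stmt5 (n k : ℕ) (hk : 1 ≤ k) (hkn : k ≤ n) :
    ∃ C : ℝ, 0 < C ∧
      ∀ κ : Fin n → ℝ, (∀ j, 1 ≤ j → j ≤ k → 0 < esymm n j κ) →
        ∀ j : Fin n, κ j ≤ 0 →
          C * ∑ i : Fin n, esymm n (k - 1) (Function.update κ i 0)
            ≤ esymm n (k - 1) (Function.update κ j 0) := by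
  have hsub : 0 < n - (k - 1) := Nat.sub_pos_of_lt (Nat.lt_of_lt_of_le (Nat.sub_lt hk one_pos) hkn)
  have hc : (0 : ℝ) < ((n - (k - 1) : ℕ) : ℝ) := by exact_mod_cast hsub
  refine ⟨((n - (k - 1) : ℕ) : ℝ)⁻¹, inv_pos.mpr hc, ?_⟩
  intro κ hpos j hj
  have key : ∀ m, m ≤ k → 0 < esymm n m (Function.update κ j 0) ∧
      esymm n m κ ≤ esymm n m (Function.update κ j 0) := by
    intro m
    induction m with
    | zero =>
      intro _
      have h0 : ∀ f : Fin n → ℝ, esymm n 0 f = 1 := by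
        intro f; simp [esymm]
      rw [h0, h0]
      exact ⟨one_pos, le_refl 1⟩
    | succ m ih =>
      intro hmk
      have ihm := ih (Nat.le_of_succ_le hmk)
      have hrec := esymm_rec κ j m
      have h2 : κ j * esymm n m (Function.update κ j 0) ≤ 0 :=
        mul_nonpos_of_nonpos_of_nonneg hj ihm.1.le
      have hle : esymm n (m+1) κ ≤ esymm n (m+1) (Function.update κ j 0) := by
        nlinarith [hrec]
      exact ⟨lt_of_lt_of_le (hpos (m+1) (Nat.succ_le_succ (Nat.zero_le m)) hmk) hle, hle⟩
  rw [sum_esymm_update κ (k-1), inv_mul_cancel_left₀ (ne_of_gt hc)]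
  exact (key (k-1) (Nat.sub_le k 1)).2
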